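/- arXiv:1708.07244 — 7 statements merged into one kernel-verified Lean document; each statement's English description precedes it below -/
import Mathlib

section
/- There exists a constant C > 0 (independent of the dimension) such that for every dimension d ≥ 2, every real ε with 0 < ε < 1, and every integer n with (n : ℝ) ≥ (C·d/ε)^((d−1)/2), there exist vectors w : Fin n → EuclideanSpace ℝ (Fin d) and scalars b : Fin n → ℝ such that the polytope P = {x | ∀ i, ⟪w i, x⟫ ≤ b i} contains the closed unit ball B = Metric.closedBall 0 1 and volume (P \ B) ≤ ε · volume B. -/
/-!
Let `δ = √(ε / (2d))` and let `S` be a maximal `δ`-separated subset of the unit sphere. The balls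
of radius `δ / 2` around the points of `S` are disjoint and lie in the shell
`1 - δ / 2 < ‖x‖ < 1 + δ / 2`, so comparing volumes gives `|S| ≤ 2d (4 / δ)^(d-1)`, which is at most
`(512 d / ε)^((d-1)/2)`. By maximality `S` is a `δ`-net of the sphere, hence the polytope
`{x | ⟪u, x⟫ ≤ 1 for all u ∈ S}` contains the unit ball and lies in the ball of radius
`(1 - δ² / 2)⁻¹ = (1 - ε / (4d))⁻¹`, whose volume exceeds that of the unit ball by a factor
`(1 - ε / (4d))^(-d) ≤ 1 + ε`.
-/

open MeasureTheory Metric Module Set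
open scoped RealInnerProductSpace NNReal ENNReal

theorem Metric.packingNumber_le_of_forall_finset {X : Type*} [PseudoEMetricSpace X] {ε : ℝ≥0}
    {A : Set X} {N : ℕ}
    (h : ∀ s : Finset X, (s : Set X) ⊆ A → IsSeparated ε (s : Set X) → s.card ≤ N) :
    packingNumber ε A ≤ N := by
  refine iSup₂_le fun C hCA => iSup_le fun hC => ?_
  by_contra! hlt
  obtain ⟨t, htC, ht⟩ := exists_subset_encard_eq (Order.add_one_le_of_lt hlt)
  have htfin : t.Finite := finite_of_encard_eq_coe ht
  have hcard := h htfin.toFinset (by simpa using htC.trans hCA) (by simpa using hC.subset htC)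
  rw [htfin.encard_eq_coe_toFinset_card] at ht
  norm_cast at ht
  omega

theorem Set.exists_fin_range_eq {α : Type*} {s : Set α} (hs : s.Nonempty) {n : ℕ}
    (hn : s.encard ≤ n) : ∃ w : Fin n → α, range w = s := by
  obtain ⟨hfin, hcard⟩ := encard_le_coe_iff_finite_ncard_le.1 hn
  have := hfin.fintype
  have : Nonempty s := hs.to_subtype
  obtain ⟨e⟩ : Nonempty (s ↪ Fin n) := Function.Embedding.nonempty_of_card_le (by
    rwa [Fintype.card_fin, ← Nat.card_eq_fintype_card, Nat.card_coe_set_eq])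
  exact ⟨Subtype.val ∘ Function.invFun e, by
    rw [(Function.invFun_surjective e.injective).range_comp, Subtype.range_coe]⟩

theorem two_mul_le_four_pow_sub_one {d : ℕ} (hd : 2 ≤ d) : (2 * d : ℝ) ≤ 4 ^ (d - 1) := by
  have hbernoulli := one_add_mul_le_pow (a := (3 : ℝ)) (by norm_num) (d - 1)
  rw [Nat.cast_sub (by omega)] at hbernoulli
  have hd' : (2 : ℝ) ≤ d := by exact_mod_cast hd
  norm_num at hbernoulli
  linarith

theorem two_mul_four_div_pow_le_rpow {d : ℕ} (hd : 2 ≤ d) {ε δ : ℝ} (hδ0 : 0 ≤ δ)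
    (hδ : δ ^ 2 = ε / (2 * d)) :
    2 * d * (4 / δ) ^ (d - 1) ≤ (512 * d / ε) ^ (((d : ℝ) - 1) / 2) :=
  calc 2 * d * (4 / δ) ^ (d - 1) ≤ 4 ^ (d - 1) * (4 / δ) ^ (d - 1) := by
        gcongr; exact two_mul_le_four_pow_sub_one hd
    _ = ((16 / δ) ^ 2) ^ (((d : ℝ) - 1) / 2) := by
        rw [← mul_pow, ← Real.rpow_natCast_mul (by positivity),
          show ((2 : ℕ) : ℝ) * (((d : ℝ) - 1) / 2) = ((d - 1 : ℕ) : ℝ) by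
            rw [Nat.cast_sub (by omega), Nat.cast_ofNat, Nat.cast_one]; ring,
          Real.rpow_natCast]
        congr 1
        ring
    _ = (512 * d / ε) ^ (((d : ℝ) - 1) / 2) := by
        rw [div_pow, hδ]; congr 1; field_simp; ring

theorem inv_one_sub_div_pow_le {ε : ℝ} (hε0 : 0 ≤ ε) (hε1 : ε ≤ 1) (d : ℕ) :
    (1 - ε / (4 * d))⁻¹ ^ d ≤ 1 + ε := by
  rcases Nat.eq_zero_or_pos d with rfl | hd
  · simpa using hε0
  have hd' : (1 : ℝ) ≤ d := by exact_mod_cast hd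
  have hbernoulli : 1 - ε / 4 ≤ (1 - ε / (4 * d)) ^ d := by
    have := one_add_mul_le_pow (a := -(ε / (4 * d))) (by
      have : ε / (4 * d) ≤ 1 := by rw [div_le_one (by positivity)]; linarith
      linarith) d
    have hmul : (d : ℝ) * (ε / (4 * d)) = ε / 4 := by field_simp
    rwa [mul_neg, hmul, ← sub_eq_add_neg, ← sub_eq_add_neg] at this
  rw [inv_pow]
  refine inv_le_of_inv_le₀ (by linarith)
    ((inv_le_iff_one_le_mul₀ (by linarith)).2 ?_ |>.trans hbernoulli)
  nlinarith

section Packing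

variable {E : Type*} [NormedAddCommGroup E] [NormedSpace ℝ E] [FiniteDimensional ℝ E]

theorem card_mul_pow_le_of_isSeparated_subset_sphere {δ : ℝ≥0} (hδ0 : 0 < δ) (hδ2 : δ ≤ 2)
    {s : Finset E} (hs : (s : Set E) ⊆ sphere 0 1) (hsep : IsSeparated δ (s : Set E)) :
    s.card * ((δ : ℝ) / 2) ^ finrank ℝ E ≤
      (1 + (δ : ℝ) / 2) ^ finrank ℝ E - (1 - (δ : ℝ) / 2) ^ finrank ℝ E := by
  borelize E
  set μ : Measure E := Measure.addHaar
  set t : ℝ := δ / 2 with ht_def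
  have ht0 : 0 < t := by positivity
  have ht1 : t ≤ 1 := by rw [ht_def, div_le_one two_pos]; exact_mod_cast hδ2
  have hdisj : (s : Set E).PairwiseDisjoint (ball · t) := by
    intro x hx y hy hxy
    refine disjoint_left.2 fun z hzx hzy => ?_
    have hxy : (δ : ℝ) < dist x y := by
      simpa [edist_dist, ENNReal.ofReal_lt_ofReal_iff_of_nonneg] using hsep hx hy hxy
    linarith [dist_triangle_left x y z, (mem_ball.1 hzx : dist z x < t),
      (mem_ball.1 hzy : dist z y < t)]
  have hshell : (⋃ x ∈ s, ball x t) ⊆ ball 0 (1 + t) \ closedBall 0 (1 - t) := by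
    simp only [iUnion_subset_iff]
    intro x hx z hz
    have hx1 : ‖x‖ = 1 := by simpa using hs hx
    have hzx : ‖z - x‖ < t := mem_ball_iff_norm.1 hz
    simp only [mem_sdiff, mem_ball_zero_iff, mem_closedBall_zero_iff, not_le]
    constructor <;> linarith [norm_sub_norm_le z x, norm_sub_norm_le x z, norm_sub_rev z x]
  have hvolume := measure_mono (μ := μ) hshell
  rw [measure_biUnion_finset hdisj fun _ _ => measurableSet_ball,
    measure_sdiff (closedBall_subset_ball (by linarith)) measurableSet_closedBall.nullMeasurableSet
      measure_closedBall_lt_top.ne] at hvolume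
  simp only [μ.addHaar_ball_of_pos _ ht0, μ.addHaar_ball_of_pos _ (by linarith : 0 < 1 + t),
    μ.addHaar_closedBall _ (by linarith : 0 ≤ 1 - t), Finset.sum_const, nsmul_eq_mul,
    ← mul_assoc, ← ENNReal.sub_mul fun _ _ => measure_ball_lt_top.ne] at hvolume
  rwa [ENNReal.mul_le_mul_iff_left (measure_ball_pos μ 0 one_pos).ne' measure_ball_lt_top.ne,
    ← ENNReal.ofReal_natCast, ← ENNReal.ofReal_mul (by positivity),
    ← ENNReal.ofReal_sub _ (by positivity),
    ENNReal.ofReal_le_ofReal_iff (sub_nonneg.2 (by gcongr; linarith))] at hvolume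

theorem card_le_of_isSeparated_subset_sphere {δ : ℝ≥0} (hδ0 : 0 < δ) (hδ2 : δ ≤ 2)
    {s : Finset E} (hs : (s : Set E) ⊆ sphere 0 1) (hsep : IsSeparated δ (s : Set E)) :
    (s.card : ℝ) ≤ 2 * finrank ℝ E * (4 / δ) ^ (finrank ℝ E - 1) := by
  have hpack := card_mul_pow_le_of_isSeparated_subset_sphere hδ0 hδ2 hs hsep
  set t : ℝ := δ / 2 with ht_def
  have ht0 : 0 < t := by positivity
  have ht1 : t ≤ 1 := by rw [ht_def, div_le_one two_pos]; exact_mod_cast hδ2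
  rcases Nat.eq_zero_or_eq_succ_pred (finrank ℝ E) with hd | hd
  · simp only [hd, pow_zero, mul_one, sub_self] at hpack
    simp [hd, hpack]
  set k := finrank ℝ E - 1
  rw [hd] at hpack
  have hmax : max |1 + t| |1 - t| ≤ 2 := by
    rw [abs_of_pos (by linarith), abs_of_nonneg (by linarith)]
    exact max_le (by linarith) (by linarith)
  have hdiff : (1 + t) ^ (k + 1) - (1 - t) ^ (k + 1) ≤ 2 * t * (k + 1) * 2 ^ k :=
    calc (1 + t) ^ (k + 1) - (1 - t) ^ (k + 1)
        ≤ |(1 + t) ^ (k + 1) - (1 - t) ^ (k + 1)| := le_abs_self _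
      _ ≤ |1 + t - (1 - t)| * (k + 1 : ℕ) * max |1 + t| |1 - t| ^ k := abs_pow_sub_pow_le ..
      _ ≤ 2 * t * (k + 1) * 2 ^ k := by
        rw [show 1 + t - (1 - t) = 2 * t by ring, abs_of_pos (by positivity)]
        push_cast
        gcongr
  have h4δ : (4 / δ : ℝ) = 2 / t := by rw [ht_def]; field_simp; norm_num
  rw [hd, Nat.cast_succ, h4δ, div_pow, ← mul_div_assoc, le_div_iff₀ (by positivity)]
  refine le_of_mul_le_mul_right ?_ ht0
  calc (s.card : ℝ) * t ^ k * t = s.card * t ^ (k + 1) := by ring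
    _ ≤ 2 * t * (k + 1) * 2 ^ k := hpack.trans hdiff
    _ = 2 * (k + 1) * 2 ^ k * t := by ring

theorem packingNumber_sphere_le {δ : ℝ≥0} (hδ0 : 0 < δ) (hδ2 : δ ≤ 2) {N : ℕ}
    (hN : 2 * finrank ℝ E * (4 / δ : ℝ) ^ (finrank ℝ E - 1) ≤ N) :
    packingNumber δ (sphere (0 : E) 1) ≤ N :=
  packingNumber_le_of_forall_finset fun _ hs hsep => by
    exact_mod_cast (card_le_of_isSeparated_subset_sphere hδ0 hδ2 hs hsep).trans hN

theorem exists_fin_isCover_sphere [Nontrivial E] {δ : ℝ≥0} (hδ0 : 0 < δ) (hδ2 : δ ≤ 2) {n : ℕ}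
    (hn : 2 * finrank ℝ E * (4 / δ : ℝ) ^ (finrank ℝ E - 1) ≤ n) :
    ∃ w : Fin n → E, range w ⊆ sphere 0 1 ∧ IsCover δ (sphere 0 1) (range w) := by
  have hpacking := packingNumber_sphere_le hδ0 hδ2 hn
  have hfinite : packingNumber δ (sphere (0 : E) 1) ≠ ⊤ :=
    (hpacking.trans_lt (ENat.natCast_lt_top n)).ne
  have hcov := isCover_maximalSeparatedSet hfinite
  obtain ⟨w, hw⟩ := exists_fin_range_eq (hcov.nonempty (NormedSpace.sphere_nonempty.2 zero_le_one))
    ((encard_maximalSeparatedSet hfinite).trans_le hpacking)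
  exact ⟨w, hw ▸ maximalSeparatedSet_subset, hw ▸ hcov⟩

end Packing

section Volume

variable {E : Type*} [NormedAddCommGroup E] [NormedSpace ℝ E] [FiniteDimensional ℝ E]
  [MeasurableSpace E] [BorelSpace E] (μ : Measure E) [μ.IsAddHaarMeasure]

theorem MeasureTheory.Measure.addHaar_closedBall_sdiff_closedBall_one {r : ℝ} (hr : 1 ≤ r) :
    μ (closedBall (0 : E) r \ closedBall 0 1) =
      ENNReal.ofReal (r ^ finrank ℝ E - 1) * μ (closedBall 0 1) := by
  rw [measure_sdiff (closedBall_subset_closedBall hr) measurableSet_closedBall.nullMeasurableSet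
      measure_closedBall_lt_top.ne, μ.addHaar_closedBall' 0 (by linarith),
    ENNReal.ofReal_sub _ zero_le_one, ENNReal.sub_mul fun _ _ => measure_closedBall_lt_top.ne,
    ENNReal.ofReal_one, one_mul]

theorem MeasureTheory.Measure.addHaar_sdiff_closedBall_le {ε : ℝ} (hε0 : 0 ≤ ε) (hε1 : ε ≤ 1)
    {P : Set E} (hP : P ⊆ closedBall 0 (1 - ε / (4 * finrank ℝ E))⁻¹) :
    μ (P \ closedBall 0 1) ≤ ENNReal.ofReal ε * μ (closedBall 0 1) := by
  set s := ε / (4 * finrank ℝ E)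
  have hs0 : 0 ≤ s := by positivity
  have hs1 : s < 1 := by
    rcases Nat.eq_zero_or_pos (finrank ℝ E) with hd | hd
    · simp [s, hd]
    · have hd' : (1 : ℝ) ≤ finrank ℝ E := by exact_mod_cast hd
      exact (div_lt_one (by positivity)).2 (by linarith)
  calc μ (P \ closedBall 0 1) ≤ μ (closedBall 0 (1 - s)⁻¹ \ closedBall 0 1) :=
        measure_mono (sdiff_subset_sdiff_left hP)
    _ = ENNReal.ofReal ((1 - s)⁻¹ ^ finrank ℝ E - 1) * μ (closedBall 0 1) :=
        μ.addHaar_closedBall_sdiff_closedBall_one ((one_le_inv₀ (by linarith)).2 (by linarith))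
    _ ≤ ENNReal.ofReal ε * μ (closedBall 0 1) := by
        gcongr
        linarith [inv_one_sub_div_pow_le hε0 hε1 (finrank ℝ E)]

end Volume

section InnerProduct

variable {F : Type*} [NormedAddCommGroup F] [InnerProductSpace ℝ F]

theorem norm_mul_one_sub_le_of_isCover_sphere {δ : ℝ≥0} {S : Set F} (hS : S ⊆ sphere 0 1)
    (hcov : IsCover δ (sphere 0 1) S) {x : F} (hx : ∀ u ∈ S, ⟪u, x⟫ ≤ 1) :
    ‖x‖ * (1 - (δ : ℝ) ^ 2 / 2) ≤ 1 := by
  rcases eq_or_ne x 0 with rfl | hx0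
  · simp
  have hnx : 0 < ‖x‖ := norm_pos_iff.2 hx0
  set v := ‖x‖⁻¹ • x
  obtain ⟨u, hu, hvu⟩ := hcov (x := v) (by simp [v, norm_smul, hnx.ne'])
  have hvu : ‖v - u‖ ≤ δ := by simpa [edist_dist, dist_eq_norm, ← NNReal.coe_le_coe] using hvu
  have hu1 : ‖u‖ = 1 := by simpa using hS hu
  have hv1 : ‖v‖ = 1 := by simp [v, norm_smul, hnx.ne']
  have hinner : ⟪u, x⟫ = ‖x‖ * (1 - ‖v - u‖ ^ 2 / 2) := by
    rw [norm_sub_sq_real, hu1, hv1, real_inner_comm u v]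
    have hxv : x = ‖x‖ • v := by simp [v, smul_smul, hnx.ne']
    conv_lhs => rw [hxv, real_inner_smul_right]
    ring
  calc ‖x‖ * (1 - (δ : ℝ) ^ 2 / 2) ≤ ‖x‖ * (1 - ‖v - u‖ ^ 2 / 2) := by gcongr
    _ = ⟪u, x⟫ := hinner.symm
    _ ≤ 1 := hx u hu

theorem closedBall_subset_setOf_forall_inner_le_one {ι : Type*} {w : ι → F}
    (hw : ∀ i, ‖w i‖ ≤ 1) : closedBall (0 : F) 1 ⊆ {x | ∀ i, ⟪w i, x⟫ ≤ 1} := fun x hx i =>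
  (real_inner_le_norm _ _).trans (mul_le_one₀ (hw i) (norm_nonneg x) (mem_closedBall_zero_iff.1 hx))

theorem setOf_forall_inner_le_one_subset_closedBall {ι : Type*} {w : ι → F} {δ : ℝ≥0}
    (hδ : (δ : ℝ) ^ 2 < 2) (hw : range w ⊆ sphere 0 1) (hcov : IsCover δ (sphere 0 1) (range w)) :
    {x | ∀ i, ⟪w i, x⟫ ≤ 1} ⊆ closedBall 0 (1 - (δ : ℝ) ^ 2 / 2)⁻¹ := fun x hx => by
  rw [mem_closedBall_zero_iff, ← one_div, le_div_iff₀ (by linarith)]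
  exact norm_mul_one_sub_le_of_isCover_sphere hw hcov (forall_mem_range.2 hx)

end InnerProduct

theorem ball_approximation_with_threshold :
    ∃ C : ℝ, 0 < C ∧
      ∀ d : ℕ, 2 ≤ d → ∀ ε : ℝ, 0 < ε → ε < 1 →
        ∀ n : ℕ, (C * (d : ℝ) / ε) ^ (((d : ℝ) - 1) / 2) ≤ (n : ℝ) →
          ∃ (w : Fin n → EuclideanSpace ℝ (Fin d)) (b : Fin n → ℝ),
            Metric.closedBall (0 : EuclideanSpace ℝ (Fin d)) 1 ⊆
              {x : EuclideanSpace ℝ (Fin d) | ∀ i, ⟪w i, x⟫ ≤ b i} ∧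
            volume ({x : EuclideanSpace ℝ (Fin d) | ∀ i, ⟪w i, x⟫ ≤ b i} \
                Metric.closedBall (0 : EuclideanSpace ℝ (Fin d)) 1) ≤
              ENNReal.ofReal ε *
                volume (Metric.closedBall (0 : EuclideanSpace ℝ (Fin d)) 1) := by
  refine ⟨512, by norm_num, fun d hd ε hε0 hε1 n hn => ?_⟩
  have hfinrank : finrank ℝ (EuclideanSpace ℝ (Fin d)) = d := finrank_euclideanSpace_fin
  have : Nontrivial (EuclideanSpace ℝ (Fin d)) := nontrivial_of_finrank_pos (R := ℝ) (by omega)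
  have hd' : (2 : ℝ) ≤ d := by exact_mod_cast hd
  set δ : ℝ≥0 := Real.toNNReal √(ε / (2 * d))
  have hδsq : (δ : ℝ) ^ 2 = ε / (2 * d) := by
    rw [Real.coe_toNNReal _ (Real.sqrt_nonneg _), Real.sq_sqrt (by positivity)]
  have hδsq_le : (δ : ℝ) ^ 2 ≤ 1 / 4 := by
    rw [hδsq, div_le_iff₀ (by positivity)]; linarith
  have hδ0 : 0 < δ := by simp [δ]; positivity
  have hδ2 : δ ≤ 2 := by
    rw [← NNReal.coe_le_coe]; push_cast; nlinarith [δ.coe_nonneg]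
  obtain ⟨w, hw_sphere, hcov⟩ := exists_fin_isCover_sphere hδ0 hδ2 (n := n) (by
    rw [hfinrank]; exact (two_mul_four_div_pow_le_rpow hd δ.coe_nonneg hδsq).trans hn)
  refine ⟨w, fun _ => 1, closedBall_subset_setOf_forall_inner_le_one fun i =>
    (mem_sphere_zero_iff_norm.1 (hw_sphere (mem_range_self i))).le, ?_⟩
  refine volume.addHaar_sdiff_closedBall_le hε0.le hε1.le ?_
  rw [hfinrank, show ε / (4 * d) = (δ : ℝ) ^ 2 / 2 by rw [hδsq]; ring]
  exact setOf_forall_inner_le_one_subset_closedBall (by linarith) hw_sphere hcov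
end

section
/- Let d ≥ 1 and let w : Fin m → EuclideanSpace ℝ (Fin d) with w i ≠ 0 for all i, and b : Fin m → ℝ, defining the affine hyperplanes H i = {x | ⟪w i, x⟫ = b i}. Then the number of connected components of the open set U = (⋃ i, H i)ᶜ satisfies Nat.card (ConnectedComponents ↥U) ≤ ∑ k in Finset.range (d+1), Nat.choose m k. -/
/-!
A point off all hyperplanes determines the set of hyperplanes it lies strictly above. Two points
with the same such sign pattern are joined by a segment inside an intersection of open
half-spaces, so there are at most as many regions as realized sign patterns. The family of
realized patterns shatters no set `s` of more than `d` indices: a nontrivial relation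
`∑ i ∈ s, g i • w i = 0` makes `∑ i ∈ s, g i * (⟪w i, x⟫ - b i)` independent of `x`, yet this sum
is positive at a point realizing the pattern `{g > 0}` on `s` and negative at one realizing
`{g < 0}`. The Sauer–Shelah lemma then bounds the number of patterns by `∑ k ≤ d, C(m, k)`.
-/

open scoped RealInnerProductSpace
open Finset Module

theorem Finset.card_le_sum_choose_of_vcDim_le {α : Type*} [DecidableEq α] [Fintype α]
    {𝒜 : Finset (Finset α)} {d : ℕ} (h : 𝒜.vcDim ≤ d) :
    #𝒜 ≤ ∑ k ∈ range (d + 1), (Fintype.card α).choose k :=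
  calc #𝒜 ≤ #𝒜.shatterer := card_le_card_shatterer 𝒜
    _ ≤ ∑ k ∈ Iic 𝒜.vcDim, (Fintype.card α).choose k := card_shatterer_le_sum_vcDim
    _ ≤ ∑ k ∈ range (d + 1), (Fintype.card α).choose k :=
      sum_le_sum_of_subset fun _ hk => mem_range.2 (Nat.lt_succ_of_le ((mem_Iic.1 hk).trans h))

theorem exists_sum_smul_eq_zero_of_finrank_lt_card {K V ι : Type*} [DivisionRing K]
    [AddCommGroup V] [Module K V] [FiniteDimensional K V] (v : ι → V) {s : Finset ι}
    (h : finrank K V < #s) : ∃ g : ι → K, ∑ i ∈ s, g i • v i = 0 ∧ ∃ i ∈ s, g i ≠ 0 := by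
  have hdep : ¬LinearIndepOn K v (s : Set ι) := fun hind => by
    have := LinearIndependent.fintype_card_le_finrank hind
    simp only [Finset.coe_sort_coe, Fintype.card_coe] at this
    omega
  obtain ⟨f, hfs, hfsum, hf0⟩ := linearDepOn_iff.1 hdep
  obtain ⟨i, hi⟩ := Finsupp.ne_iff.1 hf0
  refine ⟨f, ?_, i, hfs (Finsupp.mem_support_iff.2 hi), hi⟩
  rw [← hfsum]
  exact (sum_subset (fun j hj => hfs hj) fun j _ hj => by
    rw [Finsupp.notMem_support_iff.1 hj, zero_smul]).symm

theorem mul_sub_pos_of_lt_iff_pos {a c g : ℝ} (hac : a ≠ c) (h : c < a ↔ 0 < g) (hg : g ≠ 0) :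
    0 < g * (a - c) := by
  rcases hg.lt_or_gt with hg | hg
  · have : a < c := lt_of_le_of_ne (not_lt.1 fun hca => (h.1 hca).not_gt hg) hac
    nlinarith
  · have : c < a := h.2 hg
    nlinarith

section Arrangement

variable {E ι : Type*} [NormedAddCommGroup E] [InnerProductSpace ℝ E] (w : ι → E) (b : ι → ℝ)

def arrangementComplement : Set E := (⋃ i, {x : E | ⟪w i, x⟫ = b i})ᶜ

variable {w b}

theorem mem_arrangementComplement {x : E} :
    x ∈ arrangementComplement w b ↔ ∀ i, ⟪w i, x⟫ ≠ b i := by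
  simp [arrangementComplement]

theorem sum_mul_inner_sub_eq_of_sum_smul_eq_zero {s : Finset ι} {g : ι → ℝ}
    (hg : ∑ i ∈ s, g i • w i = 0) (x : E) :
    ∑ i ∈ s, g i * (⟪w i, x⟫ - b i) = -∑ i ∈ s, g i * b i := by
  have hlin : ∑ i ∈ s, g i * ⟪w i, x⟫ = 0 := by
    simp_rw [← real_inner_smul_left, ← sum_inner, hg, inner_zero_left]
  simp only [mul_sub, sum_sub_distrib, hlin, zero_sub]

variable [Fintype ι]

variable (w b) in
noncomputable def signSet (x : E) : Finset ι := {i | b i < ⟪w i, x⟫}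

theorem mem_signSet {x : E} {i : ι} : i ∈ signSet w b x ↔ b i < ⟪w i, x⟫ := by
  simp [signSet]

theorem segment_subset_arrangementComplement {x y : E} (hx : x ∈ arrangementComplement w b)
    (hy : y ∈ arrangementComplement w b) (hxy : signSet w b x = signSet w b y) :
    segment ℝ x y ⊆ arrangementComplement w b := by
  intro z hz
  rw [mem_arrangementComplement] at hx hy ⊢
  intro i
  have hinner : IsLinearMap ℝ (fun z : E => ⟪w i, z⟫) := (innerₛₗ ℝ (w i)).isLinear
  by_cases hxi : b i < ⟪w i, x⟫
  · have hyi : b i < ⟪w i, y⟫ := by rwa [← mem_signSet, ← hxy, mem_signSet]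
    exact ((convex_halfSpace_gt hinner (b i)).segment_subset hxi hyi hz).ne'
  · have hyi : ¬b i < ⟪w i, y⟫ := by rwa [← mem_signSet, ← hxy, mem_signSet]
    exact ((convex_halfSpace_lt hinner (b i)).segment_subset ((not_lt.1 hxi).lt_of_ne (hx i))
      ((not_lt.1 hyi).lt_of_ne (hy i)) hz).ne

theorem connectedComponents_mk_eq_of_signSet_eq {x y : arrangementComplement w b}
    (hxy : signSet w b x = signSet w b y) :
    ConnectedComponents.mk x = ConnectedComponents.mk y := by
  have hseg := segment_subset_arrangementComplement x.2 y.2 hxy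
  have hpre : IsPreconnected ((↑) ⁻¹' segment ℝ (x : E) y : Set (arrangementComplement w b)) := by
    rw [← Topology.IsInducing.subtypeVal.isPreconnected_image, Subtype.image_preimage_coe,
      Set.inter_eq_self_of_subset_right hseg]
    exact (convex_segment _ _).isPreconnected
  exact ConnectedComponents.coe_eq_coe'.2
    (hpre.subset_connectedComponent (right_mem_segment ℝ _ _) (left_mem_segment ℝ _ _))

open Classical in
variable (w b) in
noncomputable def signPatterns : Finset (Finset ι) :=
  {s | ∃ x ∈ arrangementComplement w b, signSet w b x = s}

theorem mem_signPatterns {s : Finset ι} :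
    s ∈ signPatterns w b ↔ ∃ x ∈ arrangementComplement w b, signSet w b x = s := by
  simp [signPatterns]

theorem card_connectedComponents_le_card_signPatterns :
    Nat.card (ConnectedComponents (arrangementComplement w b)) ≤ #(signPatterns w b) := by
  have hrep (u : signPatterns w b) := mem_signPatterns.1 u.2
  let rep (u : signPatterns w b) : arrangementComplement w b := ⟨_, (hrep u).choose_spec.1⟩
  have hsurj : Function.Surjective fun u => ConnectedComponents.mk (rep u) := by
    rintro ⟨x⟩
    have hx : signSet w b x ∈ signPatterns w b := mem_signPatterns.2 ⟨x, x.2, rfl⟩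
    exact ⟨⟨_, hx⟩, connectedComponents_mk_eq_of_signSet_eq (hrep ⟨_, hx⟩).choose_spec.2⟩
  exact (Nat.card_le_card_of_surjective _ hsurj).trans (Nat.card_eq_finsetCard _).le

variable [DecidableEq ι]

/-- Each term `g i * (⟪w i, x⟫ - b i)` of the constant sum is nonnegative, and positive where
`g i ≠ 0`. -/
theorem neg_sum_mul_pos_of_inter_signSet_eq {s : Finset ι} {g : ι → ℝ}
    (hg : ∑ i ∈ s, g i • w i = 0) (hg0 : ∃ i ∈ s, g i ≠ 0) {x : E}
    (hx : x ∈ arrangementComplement w b) (hxs : s ∩ signSet w b x = {i ∈ s | 0 < g i}) :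
    0 < -∑ i ∈ s, g i * b i := by
  have hside : ∀ i ∈ s, b i < ⟪w i, x⟫ ↔ 0 < g i := fun i hi => by
    simpa [hi, mem_signSet] using congrArg (i ∈ ·) hxs
  have hterm : ∀ i ∈ s, g i ≠ 0 → 0 < g i * (⟪w i, x⟫ - b i) := fun i hi =>
    mul_sub_pos_of_lt_iff_pos (mem_arrangementComplement.1 hx i) (hside i hi)
  rw [← sum_mul_inner_sub_eq_of_sum_smul_eq_zero hg x]
  obtain ⟨i, hi, hgi⟩ := hg0
  refine sum_pos' (fun j hj => ?_) ⟨i, hi, hterm i hi hgi⟩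
  by_cases hgj : g j = 0
  · simp [hgj]
  · exact (hterm j hj hgj).le

theorem not_shatters_signPatterns_of_sum_smul_eq_zero {s : Finset ι} {g : ι → ℝ}
    (hg : ∑ i ∈ s, g i • w i = 0) (hg0 : ∃ i ∈ s, g i ≠ 0) :
    ¬(signPatterns w b).Shatters s := by
  intro hs
  obtain ⟨_, hu, hsu⟩ := hs (filter_subset (fun i => 0 < g i) s)
  obtain ⟨x, hx, rfl⟩ := mem_signPatterns.1 hu
  obtain ⟨_, hv, hsv⟩ := hs (filter_subset (fun i => 0 < -g i) s)
  obtain ⟨y, hy, rfl⟩ := mem_signPatterns.1 hv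
  have hpos := neg_sum_mul_pos_of_inter_signSet_eq hg hg0 hx hsu
  have hneg := neg_sum_mul_pos_of_inter_signSet_eq (g := -g) (by simp [neg_smul, hg])
    (by simpa using hg0) hy hsv
  simp only [Pi.neg_apply, neg_mul, sum_neg_distrib, neg_neg] at hneg
  linarith

theorem vcDim_signPatterns_le [FiniteDimensional ℝ E] :
    (signPatterns w b).vcDim ≤ finrank ℝ E :=
  Finset.sup_le fun s hs => by
    by_contra! hlt
    obtain ⟨g, hg, hg0⟩ := exists_sum_smul_eq_zero_of_finrank_lt_card w hlt
    exact not_shatters_signPatterns_of_sum_smul_eq_zero hg hg0 (mem_shatterer.1 hs)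

variable (w b) in
theorem card_connectedComponents_arrangementComplement_le [FiniteDimensional ℝ E] :
    Nat.card (ConnectedComponents (arrangementComplement w b)) ≤
      ∑ k ∈ range (finrank ℝ E + 1), (Fintype.card ι).choose k :=
  card_connectedComponents_le_card_signPatterns.trans
    (card_le_sum_choose_of_vcDim_le vcDim_signPatterns_le)

end Arrangement

theorem hyperplane_region_count_upper_bound_general (d m : ℕ)
    (w : Fin m → EuclideanSpace ℝ (Fin d)) (b : Fin m → ℝ) :
    Nat.card (ConnectedComponents
        ↥((⋃ i, {x : EuclideanSpace ℝ (Fin d) | ⟪w i, x⟫ = b i})ᶜ)) ≤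
      ∑ k ∈ Finset.range (d + 1), Nat.choose m k := by
  have h := card_connectedComponents_arrangementComplement_le w b
  rwa [finrank_euclideanSpace_fin, Fintype.card_fin] at h

theorem hyperplane_region_count_upper_bound (d m : ℕ) (hd : 1 ≤ d)
    (w : Fin m → EuclideanSpace ℝ (Fin d)) (b : Fin m → ℝ)
    (hw : ∀ i, w i ≠ 0) :
    Nat.card (ConnectedComponents
        ↥((⋃ i, {x : EuclideanSpace ℝ (Fin d) | ⟪w i, x⟫ = b i})ᶜ)) ≤
      ∑ k ∈ Finset.range (d + 1), Nat.choose m k :=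
  hyperplane_region_count_upper_bound_general d m w b
end

section
/- Let d ≥ 1 and let w : Fin m → EuclideanSpace ℝ (Fin d), b : Fin m → ℝ define affine hyperplanes H i = {x | ⟪w i, x⟫ = b i} in general position, meaning: (i) for every s : Finset (Fin m) with s.card ≤ d, the family of vectors (w i)_{i ∈ s} is linearly independent, and (ii) for every s : Finset (Fin m) with s.card = d + 1, ⋂ i ∈ s, H i = ∅. Then the number of connected components of U = (⋃ i, H i)ᶜ equals exactly ∑ k in Finset.range (d+1), Nat.choose m k. -/
/-!
Record, for each point off the hyperplanes, on which side of each hyperplane it lies. The sets of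
points with a fixed sign vector are open and convex, so they are exactly the regions, and the
number of regions is the number of realized sign vectors. Deleting the hyperplane `H₀` leaves an
arrangement whose regions either avoid `H₀`, and then come from one region of the original
arrangement, or meet it, and then are cut into two; the latter correspond to the regions of the
arrangement induced on `H₀ ≅ ℝ^(d-1)`, which is again in general position. So the count `r(m, d)`
satisfies Pascal's recursion `r(m+1, d) = r(m, d) + r(m, d-1)`, solved by `∑ k ≤ d, (m choose k)`.
-/

open scoped RealInnerProductSpace
open Set Topology

theorem IsLocallyConstant.card_connectedComponents_eq_card_range {X Y : Type*}
    [TopologicalSpace X] {f : X → Y} (hf : IsLocallyConstant f)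
    (hfib : ∀ y, IsPreconnected (f ⁻¹' {y})) :
    Nat.card (ConnectedComponents X) = Nat.card (range f) := by
  let g : ConnectedComponents X → Y := Quotient.lift f fun x y hxy =>
    hf.apply_eq_of_isPreconnected isPreconnected_connectedComponent mem_connectedComponent
      (hxy ▸ mem_connectedComponent)
  have hg : Function.Injective g := by
    rintro ⟨x⟩ ⟨y⟩ hxy
    exact ConnectedComponents.coe_eq_coe'.2
      ((hfib (f y)).subset_connectedComponent (x := y) rfl hxy)
  rw [← Nat.card_range_of_injective hg, ← ConnectedComponents.surjective_coe.range_comp]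
  rfl

theorem Set.ncard_eq_sum_ncard_preimage_fin_cons {α : Type*} [Fintype α] {m : ℕ}
    (S : Set (Fin (m + 1) → α)) :
    S.ncard = ∑ a, (Fin.cons (α := fun _ => α) a ⁻¹' S).ncard := by
  simp_rw [← Nat.card_coe_set_eq]
  rw [← Nat.card_sigma, Nat.card_congr ((Equiv.subtypeEquiv (Fin.consEquiv fun _ => α)
    fun _ => Iff.rfl).symm.trans (Equiv.subtypeProdEquivSigmaSubtype fun a σ => Fin.cons a σ ∈ S))]
  rfl

theorem Finset.sum_range_choose_zero (d : ℕ) : ∑ k ∈ Finset.range (d + 1), Nat.choose 0 k = 1 := by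
  simp [Finset.sum_range_succ']

theorem Finset.sum_range_succ_choose_succ (d m : ℕ) :
    ∑ k ∈ Finset.range (d + 2), (m + 1).choose k =
      ∑ k ∈ Finset.range (d + 2), m.choose k + ∑ k ∈ Finset.range (d + 1), m.choose k := by
  simp only [Finset.sum_range_succ' _ (d + 1), Nat.choose_succ_succ, Finset.sum_add_distrib,
    Nat.choose_zero_right]
  ring

variable {E ι : Type*} [NormedAddCommGroup E] [InnerProductSpace ℝ E]

theorem real_inner_add_smul_self_right (x v : E) (t : ℝ) :
    ⟪v, x + t • v⟫ = ⟪v, x⟫ + t * ‖v‖ ^ 2 := by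
  rw [inner_add_right, real_inner_smul_right, real_inner_self_eq_norm_sq]

section SignCells

def signHalfspace (v : E) (c : ℝ) : Bool → Set E
  | true => {x | c < ⟪v, x⟫}
  | false => {x | ⟪v, x⟫ < c}

def signCell (w : ι → E) (b : ι → ℝ) (σ : ι → Bool) : Set E :=
  ⋂ i, signHalfspace (w i) (b i) (σ i)

noncomputable def signVector (w : ι → E) (b : ι → ℝ) (x : E) : ι → Bool :=
  fun i => decide (b i < ⟪w i, x⟫)

def realizedSigns (w : ι → E) (b : ι → ℝ) : Set (ι → Bool) :=
  {σ | (signCell w b σ).Nonempty}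

theorem isOpen_signHalfspace (v : E) (c : ℝ) (s : Bool) : IsOpen (signHalfspace v c s) := by
  cases s
  · exact isOpen_lt (continuous_const.inner continuous_id) continuous_const
  · exact isOpen_lt continuous_const (continuous_const.inner continuous_id)

theorem convex_signHalfspace (v : E) (c : ℝ) (s : Bool) : Convex ℝ (signHalfspace v c s) := by
  cases s
  · exact convex_halfSpace_lt (innerₛₗ ℝ v).isLinear c
  · exact convex_halfSpace_gt (innerₛₗ ℝ v).isLinear c

theorem mem_signHalfspace_iff {v x : E} {c : ℝ} (hx : ⟪v, x⟫ ≠ c) (s : Bool) :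
    x ∈ signHalfspace v c s ↔ decide (c < ⟪v, x⟫) = s := by
  cases s <;> simp [signHalfspace, hx.le_iff_lt]

theorem signHalfspace_subset_compl (v : E) (c : ℝ) (s : Bool) :
    signHalfspace v c s ⊆ {x | ⟪v, x⟫ = c}ᶜ := by
  cases s <;> intro x hx <;> simp_all [signHalfspace, ne_of_gt, ne_of_lt]

theorem isOpen_signCell [Finite ι] (w : ι → E) (b : ι → ℝ) (σ : ι → Bool) :
    IsOpen (signCell w b σ) :=
  isOpen_iInter_of_finite fun _ => isOpen_signHalfspace _ _ _

theorem convex_signCell (w : ι → E) (b : ι → ℝ) (σ : ι → Bool) :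
    Convex ℝ (signCell w b σ) :=
  convex_iInter fun _ => convex_signHalfspace _ _ _

theorem signCell_subset_compl_iUnion (w : ι → E) (b : ι → ℝ) (σ : ι → Bool) :
    signCell w b σ ⊆ (⋃ i, {x | ⟪w i, x⟫ = b i})ᶜ := by
  rw [compl_iUnion]
  exact iInter_mono fun i => signHalfspace_subset_compl _ _ _

theorem mem_signCell_iff {w : ι → E} {b : ι → ℝ} {x : E}
    (hx : x ∈ (⋃ i, {x | ⟪w i, x⟫ = b i})ᶜ) (σ : ι → Bool) :
    x ∈ signCell w b σ ↔ signVector w b x = σ := by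
  simp only [compl_iUnion, mem_iInter, mem_compl_iff] at hx
  simp only [signCell, mem_iInter, mem_signHalfspace_iff (hx _), funext_iff, signVector]

theorem realizedSigns_eq_image (w : ι → E) (b : ι → ℝ) :
    realizedSigns w b = signVector w b '' (⋃ i, {x | ⟪w i, x⟫ = b i})ᶜ := by
  ext σ
  constructor
  · rintro ⟨x, hx⟩
    have hxU := signCell_subset_compl_iUnion w b σ hx
    exact ⟨x, hxU, (mem_signCell_iff hxU σ).1 hx⟩
  · rintro ⟨x, hx, rfl⟩
    exact ⟨x, (mem_signCell_iff hx _).2 rfl⟩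

theorem card_connectedComponents_compl_iUnion [Finite ι] (w : ι → E) (b : ι → ℝ) :
    Nat.card (ConnectedComponents ↥(⋃ i, {x | ⟪w i, x⟫ = b i})ᶜ) =
      (realizedSigns w b).ncard := by
  set U := (⋃ i, {x | ⟪w i, x⟫ = b i})ᶜ
  have hfib : ∀ σ, ((fun x : U => signVector w b x) ⁻¹' {σ}) =
      ((↑) : U → E) ⁻¹' signCell w b σ := fun σ =>
    ext fun x => (mem_signCell_iff x.2 σ).symm
  have hconst : IsLocallyConstant fun x : U => signVector w b x :=
    (IsLocallyConstant.iff_exists_open _).2 fun x => ⟨_,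
      (isOpen_signCell w b (signVector w b x)).preimage continuous_subtype_val,
      (mem_signCell_iff x.2 _).2 rfl, fun y hy => (mem_signCell_iff y.2 _).1 hy⟩
  rw [hconst.card_connectedComponents_eq_card_range, ← Nat.card_coe_set_eq,
    realizedSigns_eq_image, image_eq_range]
  intro σ
  rw [hfib, ← Topology.IsInducing.subtypeVal.isPreconnected_image, image_preimage_eq_of_subset]
  · exact (convex_signCell w b σ).isPreconnected
  · rw [Subtype.range_coe]
    exact signCell_subset_compl_iUnion w b σ

theorem ncard_realizedSigns_of_subsingleton [Subsingleton E] {w : ι → E} {b : ι → ℝ}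
    (hU : (⋃ i, {x | ⟪w i, x⟫ = b i})ᶜ.Nonempty) : (realizedSigns w b).ncard = 1 := by
  obtain ⟨x, hx⟩ := hU
  rw [realizedSigns_eq_image, ncard_eq_one]
  exact ⟨_, (subsingleton_of_subsingleton.image _).eq_singleton_of_mem (mem_image_of_mem _ hx)⟩

end SignCells

section Deletion

theorem IsOpen.inter_signHalfspace_nonempty {C : Set E} (hC : IsOpen C) {v x : E} (hv : v ≠ 0)
    {c : ℝ} (hxC : x ∈ C) (hx : ⟪v, x⟫ = c) (s : Bool) : (C ∩ signHalfspace v c s).Nonempty := by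
  have hline : ∀ᶠ t in 𝓝 (0 : ℝ), x + t • v ∈ C :=
    (continuous_const.add (continuous_id.smul continuous_const)).continuousAt.preimage_mem_nhds
      (by simpa using hC.mem_nhds hxC)
  have hv2 : 0 < ‖v‖ ^ 2 := by positivity
  cases s
  · obtain ⟨t, htC, ht⟩ := ((hline.filter_mono nhdsWithin_le_nhds).and
      (self_mem_nhdsWithin : ∀ᶠ t in 𝓝[<] (0 : ℝ), t < 0)).exists
    refine ⟨x + t • v, htC, show ⟪v, x + t • v⟫ < c from ?_⟩
    rw [real_inner_add_smul_self_right, hx]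
    nlinarith
  · obtain ⟨t, htC, ht⟩ := ((hline.filter_mono nhdsWithin_le_nhds).and
      (self_mem_nhdsWithin : ∀ᶠ t in 𝓝[>] (0 : ℝ), 0 < t)).exists
    refine ⟨x + t • v, htC, show c < ⟪v, x + t • v⟫ from ?_⟩
    rw [real_inner_add_smul_self_right, hx]
    nlinarith

theorem Convex.inter_hyperplane_nonempty {C : Set E} (hC : Convex ℝ C) {v : E} {c : ℝ}
    (hpos : (C ∩ signHalfspace v c true).Nonempty)
    (hneg : (C ∩ signHalfspace v c false).Nonempty) : (C ∩ {x | ⟪v, x⟫ = c}).Nonempty := by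
  obtain ⟨y, hyC, hy⟩ := hpos
  obtain ⟨z, hzC, hz⟩ := hneg
  obtain ⟨x, hxC, hx⟩ := hC.isPreconnected.intermediate_value hzC hyC
    (continuous_const.inner continuous_id).continuousOn
    ⟨(show ⟪v, z⟫ < c from hz).le, (show c < ⟪v, y⟫ from hy).le⟩
  exact ⟨x, hxC, hx⟩

theorem inter_hyperplane_nonempty_iff {C : Set E} (hCo : IsOpen C) (hCc : Convex ℝ C) {v : E}
    (hv : v ≠ 0) (c : ℝ) : (C ∩ {x | ⟪v, x⟫ = c}).Nonempty ↔
      (C ∩ signHalfspace v c true).Nonempty ∧ (C ∩ signHalfspace v c false).Nonempty :=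
  ⟨fun ⟨_, hxC, hx⟩ => ⟨hCo.inter_signHalfspace_nonempty hv hxC hx _,
    hCo.inter_signHalfspace_nonempty hv hxC hx _⟩, fun h => hCc.inter_hyperplane_nonempty h.1 h.2⟩

theorem nonempty_iff_inter_signHalfspace_nonempty {C : Set E} (hC : IsOpen C) {v : E}
    (hv : v ≠ 0) (c : ℝ) : C.Nonempty ↔
      (C ∩ signHalfspace v c true).Nonempty ∨ (C ∩ signHalfspace v c false).Nonempty := by
  refine ⟨fun ⟨x, hxC⟩ => ?_, fun h => h.elim (·.mono inter_subset_left) (·.mono inter_subset_left)⟩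
  rcases lt_trichotomy ⟪v, x⟫ c with hx | hx | hx
  · exact Or.inr ⟨x, hxC, hx⟩
  · exact Or.inl (hC.inter_signHalfspace_nonempty hv hxC hx _)
  · exact Or.inl ⟨x, hxC, hx⟩

theorem signCell_fin_cons {m : ℕ} (w : Fin (m + 1) → E) (b : Fin (m + 1) → ℝ) (s : Bool)
    (σ : Fin m → Bool) : signCell w b (Fin.cons s σ) =
      signCell (Fin.tail w) (Fin.tail b) σ ∩ signHalfspace (w 0) (b 0) s := by
  ext x
  simp [signCell, Fin.forall_fin_succ, Fin.tail, and_comm]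

theorem ncard_realizedSigns_fin_succ {m : ℕ} (w : Fin (m + 1) → E) (b : Fin (m + 1) → ℝ)
    (hw : w 0 ≠ 0) : (realizedSigns w b).ncard = (realizedSigns (Fin.tail w) (Fin.tail b)).ncard +
      {σ | (signCell (Fin.tail w) (Fin.tail b) σ ∩ {x | ⟪w 0, x⟫ = b 0}).Nonempty}.ncard := by
  set C := signCell (Fin.tail w) (Fin.tail b)
  have hside : ∀ s, Fin.cons s ⁻¹' realizedSigns w b =
      {σ | (C σ ∩ signHalfspace (w 0) (b 0) s).Nonempty} := fun s => by
    ext σ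
    simp [realizedSigns, signCell_fin_cons, C]
  rw [ncard_eq_sum_ncard_preimage_fin_cons, Fintype.sum_bool, hside, hside,
    ← ncard_union_add_ncard_inter]
  congr 2
  · ext σ
    exact (nonempty_iff_inter_signHalfspace_nonempty (isOpen_signCell _ _ σ) hw _).symm
  · ext σ
    exact (inter_hyperplane_nonempty_iff (isOpen_signCell _ _ σ) (convex_signCell _ _ σ) hw _).symm

end Deletion

section Restriction

variable {F : Type*} [NormedAddCommGroup F] [InnerProductSpace ℝ F]

theorem mem_signHalfspace_iff_of_inner_sub_eq {v : E} {v' y : F} {x : E} {c c' : ℝ}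
    (h : ⟪v', y⟫ - c' = ⟪v, x⟫ - c) (s : Bool) :
    y ∈ signHalfspace v' c' s ↔ x ∈ signHalfspace v c s := by
  cases s
  · exact ⟨fun hy => show ⟪v, x⟫ < c by linarith [show ⟪v', y⟫ < c' from hy],
      fun hx => show ⟪v', y⟫ < c' by linarith [show ⟪v, x⟫ < c from hx]⟩
  · exact ⟨fun hy => show c < ⟪v, x⟫ by linarith [show c' < ⟪v', y⟫ from hy],
      fun hx => show c' < ⟪v', y⟫ by linarith [show c < ⟪v, x⟫ from hx]⟩

/-- The hyperplane `⟪v, x⟫ = ⟪v, p⟫` is identified with `(ℝ ∙ v)ᗮ` through `u ↦ p + u`; on it the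
arrangement `(w, b)` induces the arrangement with normals `restrictNormals v w` and offsets
`restrictOffsets w b p`. -/
noncomputable def restrictNormals (v : E) (w : ι → E) (i : ι) : (ℝ ∙ v)ᗮ :=
  (ℝ ∙ v)ᗮ.orthogonalProjectionOnto (w i)

def restrictOffsets (w : ι → E) (b : ι → ℝ) (p : E) (i : ι) : ℝ :=
  b i - ⟪w i, p⟫

theorem inner_restrictNormals_sub_restrictOffsets (v : E) (w : ι → E) (b : ι → ℝ) (p : E)
    (i : ι) (u : (ℝ ∙ v)ᗮ) :
    ⟪restrictNormals v w i, u⟫ - restrictOffsets w b p i = ⟪w i, p + u⟫ - b i := by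
  rw [restrictNormals, restrictOffsets, Submodule.inner_orthogonalProjectionOnto_eq_of_mem_right,
    inner_add_right]
  ring

theorem inner_restrictNormals_eq_iff (v : E) (w : ι → E) (b : ι → ℝ) (p : E) (i : ι)
    (u : (ℝ ∙ v)ᗮ) :
    ⟪restrictNormals v w i, u⟫ = restrictOffsets w b p i ↔ ⟪w i, p + u⟫ = b i := by
  rw [← sub_eq_zero, inner_restrictNormals_sub_restrictOffsets, sub_eq_zero]

theorem inner_add_mem_orthogonal_singleton (v p : E) (u : (ℝ ∙ v)ᗮ) : ⟪v, p + u⟫ = ⟪v, p⟫ := by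
  rw [inner_add_right, Submodule.mem_orthogonal_singleton_iff_inner_right.1 u.2, add_zero]

theorem mem_signCell_restrict_iff (v : E) (w : ι → E) (b : ι → ℝ) (p : E) (σ : ι → Bool)
    (u : (ℝ ∙ v)ᗮ) :
    u ∈ signCell (restrictNormals v w) (restrictOffsets w b p) σ ↔ p + u ∈ signCell w b σ := by
  simp only [signCell, mem_iInter,
    mem_signHalfspace_iff_of_inner_sub_eq (inner_restrictNormals_sub_restrictOffsets v w b p _ u)]

theorem realizedSigns_restrict {v p : E} {c : ℝ} (hp : ⟪v, p⟫ = c) (w : ι → E) (b : ι → ℝ) :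
    realizedSigns (restrictNormals v w) (restrictOffsets w b p) =
      {σ | (signCell w b σ ∩ {x | ⟪v, x⟫ = c}).Nonempty} := by
  ext σ
  constructor
  · rintro ⟨u, hu⟩
    exact ⟨p + u, (mem_signCell_restrict_iff v w b p σ u).1 hu,
      (inner_add_mem_orthogonal_singleton v p u).trans hp⟩
  · rintro ⟨x, hx, hxv⟩
    have hu : x - p ∈ (ℝ ∙ v)ᗮ := by
      rw [Submodule.mem_orthogonal_singleton_iff_inner_right, inner_sub_right, hxv, hp, sub_self]
    refine ⟨⟨x - p, hu⟩, (mem_signCell_restrict_iff v w b p σ _).2 ?_⟩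
    simpa using hx

theorem LinearIndepOn.restrictNormals {v : E} {w : ι → E} {s : Set ι}
    (hs : LinearIndepOn ℝ w s) (hv : v ∉ Submodule.span ℝ (w '' s)) :
    LinearIndepOn ℝ (restrictNormals v w) s := by
  have hker : LinearMap.ker ((ℝ ∙ v)ᗮ.orthogonalProjectionOnto : E →ₗ[ℝ] (ℝ ∙ v)ᗮ) = ℝ ∙ v :=
    (Submodule.ker_orthogonalProjectionOnto (K := (ℝ ∙ v)ᗮ)).trans
      (Submodule.orthogonal_orthogonal _)
  refine LinearIndependent.map hs ?_
  rw [hker, ← image_eq_range, Submodule.disjoint_span_singleton]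
  exact fun h => absurd h hv

end Restriction

structure IsGeneralPosition (d : ℕ) (w : ι → E) (b : ι → ℝ) : Prop where
  linearIndepOn : ∀ s : Finset ι, s.card ≤ d → LinearIndepOn ℝ w (s : Set ι)
  iInter_eq_empty : ∀ s : Finset ι, s.card = d + 1 → ⋂ i ∈ s, {x | ⟪w i, x⟫ = b i} = ∅

namespace IsGeneralPosition

variable {d : ℕ}

theorem comp_injective {κ : Type*} {w : ι → E} {b : ι → ℝ} (h : IsGeneralPosition d w b)
    {f : κ → ι} (hf : Function.Injective f) : IsGeneralPosition d (w ∘ f) (b ∘ f) := by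
  classical
  constructor
  · intro s hs
    have := h.linearIndepOn (s.image f) (by rwa [Finset.card_image_of_injective _ hf])
    rw [Finset.coe_image] at this
    exact this.comp_of_image hf.injOn
  · intro s hs
    rw [← h.iInter_eq_empty (s.image f) (by rwa [Finset.card_image_of_injective _ hf]),
      Finset.set_biInter_finset_image]
    rfl

theorem restrict {m : ℕ} {w : Fin (m + 1) → E} {b : Fin (m + 1) → ℝ}
    (h : IsGeneralPosition (d + 1) w b) {p : E} (hp : ⟪w 0, p⟫ = b 0) :
    IsGeneralPosition d (restrictNormals (w 0) (Fin.tail w))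
      (restrictOffsets (Fin.tail w) (Fin.tail b) p) := by
  classical
  have h0 : ∀ s : Finset (Fin m), (0 : Fin (m + 1)) ∉ s.image Fin.succ := by
    simp [Fin.succ_ne_zero]
  have hcard : ∀ s : Finset (Fin m), (insert 0 (s.image Fin.succ)).card = s.card + 1 := fun s => by
    rw [Finset.card_insert_of_notMem (h0 s), Finset.card_image_of_injective _ (Fin.succ_injective m)]
  constructor
  · intro s hs
    have := h.linearIndepOn (insert 0 (s.image Fin.succ)) (by rw [hcard]; omega)
    rw [Finset.coe_insert, linearIndepOn_insert (by exact_mod_cast h0 s), Finset.coe_image,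
      image_image] at this
    exact (this.1.comp_of_image (Fin.succ_injective m).injOn).restrictNormals this.2
  · intro s hs
    refine eq_empty_iff_forall_notMem.2 fun u hu => ?_
    have hempty := h.iInter_eq_empty (insert 0 (s.image Fin.succ)) (by rw [hcard, hs])
    rw [Finset.set_biInter_insert, Finset.set_biInter_finset_image] at hempty
    have hx : p + (u : E) ∈ {x | ⟪w 0, x⟫ = b 0} ∩ ⋂ i ∈ s, {x | ⟪w i.succ, x⟫ = b i.succ} :=
      ⟨(inner_add_mem_orthogonal_singleton _ p u).trans hp, mem_iInter₂.2 fun i hi =>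
        (inner_restrictNormals_eq_iff _ _ _ p i u).1 (mem_iInter₂.1 hu i hi)⟩
    rwa [hempty] at hx

theorem ncard_realizedSigns [FiniteDimensional ℝ E] {m : ℕ} {w : Fin m → E} {b : Fin m → ℝ}
    (h : IsGeneralPosition d w b) (hE : Module.finrank ℝ E = d) :
    (realizedSigns w b).ncard = ∑ k ∈ Finset.range (d + 1), m.choose k := by
  induction m generalizing d E with
  | zero =>
    rw [Finset.sum_range_choose_zero, ncard_eq_one]
    exact ⟨finZeroElim, eq_singleton_iff_unique_mem.2 ⟨⟨0, by simp [signCell]⟩,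
      fun σ _ => Subsingleton.elim _ _⟩⟩
  | succ m ih =>
    rcases d with _ | d
    · have : Subsingleton E := Module.finrank_zero_iff.1 hE
      have hH : ∀ i, {x : E | ⟪w i, x⟫ = b i} = ∅ := fun i => by
        simpa using h.iInter_eq_empty {i} rfl
      rw [ncard_realizedSigns_of_subsingleton ⟨0, by simp [hH]⟩]
      simp
    · have hw0 : w 0 ≠ 0 := (h.linearIndepOn {0} (by simp)).ne_zero (by simp)
      obtain ⟨p, hp⟩ : ∃ p, ⟪w 0, p⟫ = b 0 := ⟨(b 0 / ‖w 0‖ ^ 2) • w 0, by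
        rw [real_inner_smul_right, real_inner_self_eq_norm_sq]
        field_simp⟩
      have : Fact (Module.finrank ℝ E = d + 1) := ⟨hE⟩
      rw [ncard_realizedSigns_fin_succ w b hw0, ← realizedSigns_restrict hp,
        ih (w := Fin.tail w) (b := Fin.tail b) (h.comp_injective (Fin.succ_injective m)) hE,
        ih (h.restrict hp) (Submodule.finrank_orthogonal_span_singleton hw0),
        Finset.sum_range_succ_choose_succ]

end IsGeneralPosition

theorem hyperplane_region_count_general_position_general (d m : ℕ)
    (w : Fin m → EuclideanSpace ℝ (Fin d)) (b : Fin m → ℝ)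
    (h_indep : ∀ s : Finset (Fin m), s.card ≤ d →
      LinearIndependent ℝ (fun i : s => w (i : Fin m)))
    (h_empty : ∀ s : Finset (Fin m), s.card = d + 1 →
      (⋂ i ∈ s, {x : EuclideanSpace ℝ (Fin d) | ⟪w i, x⟫ = b i}) = ∅) :
    Nat.card (ConnectedComponents
        ↥((⋃ i, {x : EuclideanSpace ℝ (Fin d) | ⟪w i, x⟫ = b i})ᶜ)) =
      ∑ k ∈ Finset.range (d + 1), Nat.choose m k := by
  rw [card_connectedComponents_compl_iUnion]
  exact IsGeneralPosition.ncard_realizedSigns ⟨h_indep, h_empty⟩ finrank_euclideanSpace_fin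

theorem hyperplane_region_count_general_position (d m : ℕ) (hd : 1 ≤ d)
    (w : Fin m → EuclideanSpace ℝ (Fin d)) (b : Fin m → ℝ)
    (h_indep : ∀ s : Finset (Fin m), s.card ≤ d →
      LinearIndependent ℝ (fun i : s => w (i : Fin m)))
    (h_empty : ∀ s : Finset (Fin m), s.card = d + 1 →
      (⋂ i ∈ s, {x : EuclideanSpace ℝ (Fin d) | ⟪w i, x⟫ = b i}) = ∅) :
    Nat.card (ConnectedComponents
        ↥((⋃ i, {x : EuclideanSpace ℝ (Fin d) | ⟪w i, x⟫ = b i})ᶜ)) =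
      ∑ k ∈ Finset.range (d + 1), Nat.choose m k :=
  hyperplane_region_count_general_position_general d m w b h_indep h_empty
end

section
/- Let d, m ≥ 1 and let f : EuclideanSpace ℝ (Fin d) → ℝ be a single-hidden-layer rectifier network, f x = (∑ i, a i · max 0 (⟪w i, x⟫ + b i)) + c, with parameters a, b : Fin m → ℝ, w : Fin m → EuclideanSpace ℝ (Fin d), c : ℝ. Then there exist N ≤ ∑ k in Finset.range (d+1), Nat.choose m k and sets S : Fin N → Set (EuclideanSpace ℝ (Fin d)) such that each S j is convex, ⋃ j, S j = Set.univ, and for each j there exists a continuous affine map g j : EuclideanSpace ℝ (Fin d) →ᵃ[ℝ] ℝ with f x = g j x for all x ∈ S j. -/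
/-!
The neurons with `w i ≠ 0` are affine functionals `gᵢ` with nonzero linear part. Pushing a point
slightly along a direction transverse to all their hyperplanes leaves every hyperplane without
crossing any, so the closed cells of the strict sign patterns realized by some point cover the
space. These cells are convex, and on each of them every neuron has a fixed sign, so `f` is affine
there.

It remains to count realizable patterns: `n` functionals on a space of dimension `d` realize at most
`G(d, n) = ∑_{k ≤ d} C(n, k)` of them. Drop the last functional `φ`. A pattern of the others extends
in two ways only if its open cell, being convex, meets the hyperplane `φ = 0`, a space of dimension
`d - 1`. So `n + 1` functionals realize at most `G(d, n) + G(d - 1, n) = G(d, n + 1)` patterns.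
-/

open Set Module

theorem Set.ncard_le_ncard_exists_snoc_add_ncard_forall_snoc {n : ℕ}
    (S : Set (Fin (n + 1) → Bool)) :
    S.ncard ≤ {ε | ∃ b, Fin.snoc ε b ∈ S}.ncard + {ε | ∀ b, Fin.snoc ε b ∈ S}.ncard := by
  set A := {ε : Fin n → Bool | Fin.snoc ε true ∈ S}
  set B := {ε : Fin n → Bool | Fin.snoc ε false ∈ S}
  have hS : S ⊆ (fun ε => Fin.snoc ε true) '' A ∪ (fun ε => Fin.snoc ε false) '' B := by
    intro ε hε
    rw [← Fin.snoc_init_self ε] at hε ⊢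
    cases hb : ε (Fin.last n) <;> rw [hb] at hε
    exacts [Or.inr ⟨_, hε, rfl⟩, Or.inl ⟨_, hε, rfl⟩]
  have hunion : A ∪ B = {ε | ∃ b, Fin.snoc ε b ∈ S} := by
    ext; simp [A, B, or_comm]
  have hinter : A ∩ B = {ε | ∀ b, Fin.snoc ε b ∈ S} := by
    ext; simp [A, B, and_comm]
  calc S.ncard
      ≤ ((fun ε => Fin.snoc ε true) '' A ∪ (fun ε => Fin.snoc ε false) '' B).ncard :=
        ncard_le_ncard hS
    _ ≤ A.ncard + B.ncard := (ncard_union_le _ _).trans (add_le_add ncard_image_le ncard_image_le)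
    _ = _ := by rw [← ncard_union_add_ncard_inter, hunion, hinter]

theorem Finset.sum_range_choose_succ_succ (d n : ℕ) :
    ∑ k ∈ range (d + 2), (n + 1).choose k =
      ∑ k ∈ range (d + 2), n.choose k + ∑ k ∈ range (d + 1), n.choose k := by
  rw [sum_range_succ' _ (d + 1), sum_range_succ' (fun k => n.choose k) (d + 1)]
  simp only [Nat.choose_succ_succ, Nat.choose_zero_right, sum_add_distrib]
  ring

theorem Finset.one_le_sum_range_choose (d n : ℕ) : 1 ≤ ∑ k ∈ range (d + 1), n.choose k := by
  rw [sum_range_succ']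
  simp

theorem Module.Dual.exists_forall_apply_ne_zero {ι K E : Type*} [Field K] [Infinite K]
    [AddCommGroup E] [Module K E] [Finite ι] {f : ι → Dual K E} (hf : ∀ i, f i ≠ 0) :
    ∃ v, ∀ i, f i v ≠ 0 := by
  by_contra! h
  obtain ⟨i, hi⟩ := Subspace.exists_eq_top_of_iUnion_eq_univ (p := fun i => LinearMap.ker (f i))
    (eq_univ_of_forall fun v => mem_iUnion.mpr (h v))
  exact hf i (LinearMap.ker_eq_top.mp hi)

theorem AffineMap.sum_apply {κ k V W : Type*} [Ring k] [AddCommGroup V] [Module k V]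
    [AddCommGroup W] [Module k W] (s : Finset κ) (F : κ → V →ᵃ[k] W) (x : V) :
    (∑ i ∈ s, F i) x = ∑ i ∈ s, F i x :=
  map_sum (⟨⟨fun F : V →ᵃ[k] W => F x, rfl⟩, fun _ _ => rfl⟩ : (V →ᵃ[k] W) →+ W) F s

section RealFunctional

variable {V : Type*} [AddCommGroup V] [Module ℝ V]

theorem AffineMap.linear_ne_zero_of_lt {φ : V →ᵃ[ℝ] ℝ} {x y : V} (h : φ x < φ y) :
    φ.linear ≠ 0 := by
  intro h0
  have := φ.linearMap_vsub y x
  rw [h0, LinearMap.zero_apply, vsub_eq_sub] at this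
  linarith

theorem Convex.exists_eq_zero_of_lt {s : Set V} (hs : Convex ℝ s) (φ : V →ᵃ[ℝ] ℝ)
    {x y : V} (hx : x ∈ s) (hy : y ∈ s) (hφx : φ x < 0) (hφy : 0 < φ y) :
    ∃ z ∈ s, φ z = 0 := by
  have h0 : (0 : ℝ) ∈ openSegment ℝ (φ x) (φ y) := by
    rw [openSegment_eq_Ioo (hφx.trans hφy)]
    exact ⟨hφx, hφy⟩
  rw [← image_openSegment] at h0
  obtain ⟨z, hz, hφz⟩ := h0
  exact ⟨z, hs.openSegment_subset hx hy hz, hφz⟩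

end RealFunctional

namespace Arrangement

variable {ι V W : Type*} [AddCommGroup V] [Module ℝ V] [AddCommGroup W] [Module ℝ W]

def openCell (g : ι → V →ᵃ[ℝ] ℝ) (ε : ι → Bool) : Set V :=
  ⋂ i, g i ⁻¹' if ε i then Ioi 0 else Iio 0

def closedCell (g : ι → V →ᵃ[ℝ] ℝ) (ε : ι → Bool) : Set V :=
  ⋂ i, g i ⁻¹' if ε i then Ici 0 else Iic 0

theorem convex_openCell (g : ι → V →ᵃ[ℝ] ℝ) (ε : ι → Bool) : Convex ℝ (openCell g ε) :=
  convex_iInter fun i => by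
    split_ifs
    exacts [(convex_Ioi 0).affine_preimage (g i), (convex_Iio 0).affine_preimage (g i)]

theorem convex_closedCell (g : ι → V →ᵃ[ℝ] ℝ) (ε : ι → Bool) : Convex ℝ (closedCell g ε) :=
  convex_iInter fun i => by
    split_ifs
    exacts [(convex_Ici 0).affine_preimage (g i), (convex_Iic 0).affine_preimage (g i)]

theorem eq_of_mem_openCell {g : ι → V →ᵃ[ℝ] ℝ} {ε ε' : ι → Bool} {x : V}
    (h : x ∈ openCell g ε) (h' : x ∈ openCell g ε') : ε = ε' := by
  have sides_eq {t : ℝ} {b b' : Bool} (ht : t ∈ if b then Ioi 0 else Iio 0)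
      (ht' : t ∈ if b' then Ioi 0 else Iio 0) : b = b' := by
    cases b <;> cases b' <;> simp_all <;> linarith
  exact funext fun i => sides_eq (mem_iInter.mp h i) (mem_iInter.mp h' i)

theorem openCell_comp (g : ι → V →ᵃ[ℝ] ℝ) (e : W →ᵃ[ℝ] V) (ε : ι → Bool) :
    openCell (fun i => (g i).comp e) ε = e ⁻¹' openCell g ε := by
  ext; simp [openCell]

theorem openCell_comp_equiv {κ : Type*} (g : ι → V →ᵃ[ℝ] ℝ) (e : ι ≃ κ) (ε : κ → Bool) :
    openCell (fun k => g (e.symm k)) ε = openCell g (ε ∘ e) := by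
  ext x
  simp only [openCell, mem_iInter, mem_preimage, Function.comp_apply]
  exact e.symm.forall_congr_left.trans (by simp)

theorem openCell_snoc {n : ℕ} (g : Fin (n + 1) → V →ᵃ[ℝ] ℝ) (ε : Fin n → Bool) (b : Bool) :
    openCell g (Fin.snoc ε b) =
      openCell (fun i => g i.castSucc) ε ∩ g (Fin.last n) ⁻¹' if b then Ioi 0 else Iio 0 := by
  ext x
  simp only [openCell, mem_iInter, mem_inter_iff, mem_preimage]
  rw [Fin.forall_fin_succ']
  simp

theorem mem_closedCell_sign_cases (g : ι → V →ᵃ[ℝ] ℝ) (ε : ι → Bool) (i : ι) :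
    (∀ x ∈ closedCell g ε, 0 ≤ g i x) ∨ ∀ x ∈ closedCell g ε, g i x ≤ 0 := by
  have hmem (x) (hx : x ∈ closedCell g ε) := mem_iInter.mp hx i
  cases hb : ε i
  · exact Or.inr fun x hx => by simpa [hb] using hmem x hx
  · exact Or.inl fun x hx => by simpa [hb] using hmem x hx

def zeroSetParam (φ : V →ᵃ[ℝ] ℝ) (z₀ : V) : LinearMap.ker φ.linear →ᵃ[ℝ] V :=
  (AffineEquiv.vaddConst ℝ z₀).toAffineMap.comp (LinearMap.ker φ.linear).subtype.toAffineMap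

theorem mem_range_zeroSetParam {φ : V →ᵃ[ℝ] ℝ} {z₀ z : V} (hz₀ : φ z₀ = 0) (hz : φ z = 0) :
    z ∈ range (zeroSetParam φ z₀) := by
  refine ⟨⟨z - z₀, ?_⟩, by simp [zeroSetParam]⟩
  rw [LinearMap.mem_ker, ← vsub_eq_sub, φ.linearMap_vsub, hz, hz₀, vsub_self]

theorem setOf_forall_snoc_subset {n : ℕ} (g : Fin (n + 1) → V →ᵃ[ℝ] ℝ) :
    {ε | ∀ b, (openCell g (Fin.snoc ε b)).Nonempty} ⊆
      {ε | (openCell (fun i => g i.castSucc) ε ∩ g (Fin.last n) ⁻¹' {0}).Nonempty} := by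
  intro ε hε
  obtain ⟨x, hx, hφx⟩ := (openCell_snoc g ε true ▸ hε true :)
  obtain ⟨y, hy, hφy⟩ := (openCell_snoc g ε false ▸ hε false :)
  simp only [if_true, Bool.false_eq_true, if_false, mem_preimage, mem_Ioi, mem_Iio] at hφx hφy
  exact (convex_openCell _ ε).exists_eq_zero_of_lt _ hy hx hφy hφx

theorem ncard_openCell_nonempty_le_of_fin {n d : ℕ} [FiniteDimensional ℝ V]
    (hV : finrank ℝ V ≤ d) (g : Fin n → V →ᵃ[ℝ] ℝ) :
    {ε | (openCell g ε).Nonempty}.ncard ≤ ∑ k ∈ Finset.range (d + 1), n.choose k := by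
  induction n generalizing d V with
  | zero => exact (ncard_le_one_of_subsingleton _).trans (Finset.one_le_sum_range_choose d 0)
  | succ n ih =>
    rcases d with _ | d
    · have : Subsingleton V := finrank_zero_iff.mp (Nat.le_zero.mp hV)
      refine (ncard_le_one_iff_subsingleton.mpr ?_).trans (Finset.one_le_sum_range_choose 0 _)
      rintro ε ⟨x, hx⟩ ε' ⟨x', hx'⟩
      exact eq_of_mem_openCell hx (Subsingleton.elim x' x ▸ hx')
    set g₀ : Fin n → V →ᵃ[ℝ] ℝ := fun i => g i.castSucc
    set φ := g (Fin.last n)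
    set S := {ε | (openCell g ε).Nonempty}
    have h_exists : {ε | ∃ b, Fin.snoc ε b ∈ S} ⊆ {ε | (openCell g₀ ε).Nonempty} := by
      rintro ε ⟨b, x, hx⟩
      exact ⟨x, (openCell_snoc g ε b ▸ hx).1⟩
    have h_forall : {ε | ∀ b, Fin.snoc ε b ∈ S}.ncard ≤
        ∑ k ∈ Finset.range (d + 1), n.choose k := by
      rcases eq_empty_or_nonempty {ε | ∀ b, Fin.snoc ε b ∈ S} with hD | ⟨ε₀, hε₀⟩
      · rw [hD, ncard_empty]
        exact Nat.zero_le _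
      have h₀ : ∀ b, (openCell g (Fin.snoc ε₀ b)).Nonempty := hε₀
      obtain ⟨x, -, hφx⟩ := (openCell_snoc g ε₀ true ▸ h₀ true :)
      obtain ⟨y, -, hφy⟩ := (openCell_snoc g ε₀ false ▸ h₀ false :)
      obtain ⟨z₀, -, hz₀⟩ := setOf_forall_snoc_subset g hε₀
      have hφ : φ.linear ≠ 0 := φ.linear_ne_zero_of_lt ((mem_Iio.mp hφy).trans (mem_Ioi.mp hφx))
      have hW : finrank ℝ (LinearMap.ker φ.linear) ≤ d := by
        have := Module.Dual.finrank_ker_add_one_of_ne_zero hφ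
        omega
      refine (ncard_le_ncard fun ε hε => ?_).trans
        (ih hW fun i => (g₀ i).comp (zeroSetParam φ z₀))
      obtain ⟨z, hz, hφz⟩ := setOf_forall_snoc_subset g hε
      obtain ⟨u, rfl⟩ := mem_range_zeroSetParam hz₀ hφz
      exact ⟨u, by rwa [openCell_comp]⟩
    rw [Finset.sum_range_choose_succ_succ]
    calc S.ncard ≤ _ := ncard_le_ncard_exists_snoc_add_ncard_forall_snoc S
      _ ≤ _ := add_le_add ((ncard_le_ncard h_exists).trans (ih hV g₀)) h_forall

theorem ncard_openCell_nonempty_le [Fintype ι] [FiniteDimensional ℝ V] {d : ℕ}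
    (hV : finrank ℝ V ≤ d) (g : ι → V →ᵃ[ℝ] ℝ) :
    {ε | (openCell g ε).Nonempty}.ncard ≤
      ∑ k ∈ Finset.range (d + 1), (Fintype.card ι).choose k := by
  let e := Fintype.equivFin ι
  rw [← ncard_preimage_of_injective_subset_range e.surjective.injective_comp_right
    fun ε _ => ⟨ε ∘ e.symm, by ext; simp⟩]
  simpa only [preimage_ofPred_eq, ← openCell_comp_equiv] using
    ncard_openCell_nonempty_le_of_fin hV fun k => g (e.symm k)

open Filter Topology in
theorem exists_mem_closedCell [Finite ι] (g : ι → V →ᵃ[ℝ] ℝ) (hg : ∀ i, (g i).linear ≠ 0)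
    (x : V) : ∃ ε, (openCell g ε).Nonempty ∧ x ∈ closedCell g ε := by
  obtain ⟨v, hv⟩ := Module.Dual.exists_forall_apply_ne_zero hg
  have hline (i : ι) (t : ℝ) : g i (x + t • v) = g i x + t * (g i).linear v := by
    rw [add_comm, ← vadd_eq_add, AffineMap.map_vadd, map_smul, smul_eq_mul, vadd_eq_add, add_comm]
  -- moving slightly off `x` along `v` leaves every hyperplane and crosses none
  have h_ev : ∀ᶠ t in 𝓝[>] (0 : ℝ), ∀ i, g i (x + t • v) ≠ 0 ∧ 0 ≤ g i x * g i (x + t • v) := by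
    refine eventually_all.mpr fun i => ?_
    rcases eq_or_ne (g i x) 0 with h | h
    · filter_upwards [self_mem_nhdsWithin] with t (ht : 0 < t)
      simp [hline, h, ht.ne', hv i]
    · have hlim : Tendsto (fun t => g i x * (g i x + t * (g i).linear v)) (𝓝[>] 0)
          (𝓝 (g i x * g i x)) :=
        tendsto_nhdsWithin_of_tendsto_nhds ((by fun_prop : Continuous _).tendsto' 0 _ (by simp))
      filter_upwards [hlim.eventually_const_lt (mul_self_pos.mpr h)] with t ht
      rw [hline]
      exact ⟨fun h0 => by simp [h0] at ht, ht.le⟩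
  obtain ⟨t, ht⟩ := h_ev.exists
  refine ⟨fun i => decide (0 < g i (x + t • v)), ⟨x + t • v, mem_iInter.mpr fun i => ?_⟩,
    mem_iInter.mpr fun i => ?_⟩ <;> obtain ⟨hne, hprod⟩ := ht i
  · rcases hne.lt_or_gt with hlt | hlt <;> simp [hlt, hlt.not_gt]
  · rcases hne.lt_or_gt with hlt | hlt
    · simpa [hlt.not_gt] using nonpos_of_mul_nonneg_left hprod hlt
    · simpa [hlt] using nonneg_of_mul_nonneg_left hprod hlt

theorem exists_affineMap_eq_sum_relu_on [Fintype ι] {s : Set V} (g : ι → V →ᵃ[ℝ] ℝ) (a : ι → ℝ)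
    (hs : ∀ i, (∀ x ∈ s, 0 ≤ g i x) ∨ ∀ x ∈ s, g i x ≤ 0) :
    ∃ F : V →ᵃ[ℝ] ℝ, ∀ x ∈ s, ∑ i, a i * max 0 (g i x) = F x := by
  classical
  refine ⟨∑ i, if ∀ x ∈ s, 0 ≤ g i x then a i • g i else 0, fun x hx => ?_⟩
  rw [AffineMap.sum_apply]
  refine Finset.sum_congr rfl fun i _ => ?_
  split_ifs with h
  · simp [max_eq_right (h x hx)]
  · simp [max_eq_left (((hs i).resolve_left h) x hx)]

end Arrangement

open scoped RealInnerProductSpace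
open Arrangement

theorem shl_rectifier_piecewise_affine_general (d m : ℕ)
    (a b : Fin m → ℝ) (w : Fin m → EuclideanSpace ℝ (Fin d)) (c : ℝ)
    (f : EuclideanSpace ℝ (Fin d) → ℝ)
    (hf : ∀ x, f x = (∑ i, a i * max 0 (⟪w i, x⟫ + b i)) + c) :
    ∃ N : ℕ, N ≤ ∑ k ∈ Finset.range (d + 1), Nat.choose m k ∧
      ∃ S : Fin N → Set (EuclideanSpace ℝ (Fin d)),
        (∀ j, Convex ℝ (S j)) ∧ (⋃ j, S j) = Set.univ ∧
        ∀ j, ∃ g : EuclideanSpace ℝ (Fin d) →ᵃ[ℝ] ℝ, ∀ x ∈ S j, f x = g x := by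
  classical
  let neuron (i : Fin m) : EuclideanSpace ℝ (Fin d) →ᵃ[ℝ] ℝ :=
    (innerₛₗ ℝ (w i)).toAffineMap + AffineMap.const ℝ _ (b i)
  have hneuron (i : Fin m) (x) : neuron i x = ⟪w i, x⟫ + b i := rfl
  let g (i : {i // w i ≠ 0}) := neuron i
  let P := {ε | (openCell g ε).Nonempty}
  let e : P ≃ Fin P.ncard := (Finite.equivFin P).trans (finCongr (Nat.card_coe_set_eq P))
  refine ⟨P.ncard, ?_, fun j => closedCell g (e.symm j), fun j => convex_closedCell _ _, ?_,
    fun j => ?_⟩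
  · refine (ncard_openCell_nonempty_le finrank_euclideanSpace_fin.le g).trans
      (Finset.sum_le_sum fun k _ => Nat.choose_le_choose k ?_)
    simp
  · refine eq_univ_of_forall fun x => ?_
    obtain ⟨ε, hε, hx⟩ := exists_mem_closedCell g
      (fun i h => i.2 (by simpa [g, neuron] using LinearMap.congr_fun h (w i))) x
    exact mem_iUnion.mpr ⟨e ⟨ε, hε⟩, by simpa using hx⟩
  obtain ⟨F, hF⟩ := exists_affineMap_eq_sum_relu_on (s := closedCell g (e.symm j)) neuron a
    fun i => by
      by_cases hi : w i = 0
      · exact (le_total 0 (b i)).imp (fun h _ _ => by simpa [hneuron, hi]) fun h _ _ => by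
          simpa [hneuron, hi]
      · exact mem_closedCell_sign_cases g _ ⟨i, hi⟩
  exact ⟨F + AffineMap.const ℝ _ c, fun x hx => by simp [hf, ← hF x hx, hneuron]⟩

theorem shl_rectifier_piecewise_affine (d m : ℕ) (hd : 1 ≤ d) (hm : 1 ≤ m)
    (a b : Fin m → ℝ) (w : Fin m → EuclideanSpace ℝ (Fin d)) (c : ℝ)
    (f : EuclideanSpace ℝ (Fin d) → ℝ)
    (hf : ∀ x, f x = (∑ i, a i * max 0 (⟪w i, x⟫ + b i)) + c) :
    ∃ N : ℕ, N ≤ ∑ k ∈ Finset.range (d + 1), Nat.choose m k ∧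
      ∃ S : Fin N → Set (EuclideanSpace ℝ (Fin d)),
        (∀ j, Convex ℝ (S j)) ∧ (⋃ j, S j) = Set.univ ∧
        ∀ j, ∃ g : EuclideanSpace ℝ (Fin d) →ᵃ[ℝ] ℝ, ∀ x ∈ S j, f x = g x :=
  shl_rectifier_piecewise_affine_general d m a b w c f hf
end

section
/- For all natural numbers m, d with 2 ≤ d and d ≤ m, (d − 1)! · (∑ k in Finset.range (d+1), Nat.choose m k) ≤ m ^ d. -/
/-!
Induction on `d`, writing `G(d, m) = ∑_{k ≤ d} C(m, k)`. The base case `d = 2` is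
`1 + m + m(m-1)/2 ≤ m²`. For the step, multiply by `d + 1`: then
`(d + 1) · d! · G(d + 1, m) = (d + 1) d · (d - 1)! · G(d, m) + m(m-1)⋯(m-d)`,
and the two terms are bounded by `(d + 1) d · m^d ≤ d · m^(d+1)` and `m^(d+1)`.
-/

open Finset Nat

theorem succ_mul_factorial_mul_choose_succ_le_pow (m k : ℕ) :
    (k + 1) * (k ! * m.choose (k + 1)) ≤ m ^ (k + 1) := by
  calc (k + 1) * (k ! * m.choose (k + 1)) = m.descFactorial (k + 1) := by
        rw [descFactorial_eq_factorial_mul_choose, factorial_succ, Nat.mul_assoc]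
    _ ≤ m ^ (k + 1) := descFactorial_le_pow m (k + 1)

theorem sum_range_three_choose_le_sq {m : ℕ} (hm : 2 ≤ m) :
    ∑ k ∈ range 3, m.choose k ≤ m ^ 2 := by
  obtain ⟨j, rfl⟩ : ∃ j, m = j + 2 := ⟨m - 2, by omega⟩
  have h2 : 2 * (j + 2).choose 2 = (j + 2) * (j + 1) := by
    simpa [descFactorial, Nat.mul_comm] using
      (descFactorial_eq_factorial_mul_choose (j + 2) 2).symm
  simp only [sum_range_succ, sum_range_zero, choose_zero_right, choose_one_right]
  nlinarith

theorem factorial_mul_sum_choose_succ_le {m n : ℕ} (hnm : n + 2 ≤ m)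
    (ih : n ! * ∑ k ∈ range (n + 2), m.choose k ≤ m ^ (n + 1)) :
    (n + 1)! * ∑ k ∈ range (n + 3), m.choose k ≤ m ^ (n + 2) := by
  have hsum : (n + 2) * ((n + 1)! * ∑ k ∈ range (n + 2), m.choose k) ≤ (n + 1) * m ^ (n + 2) :=
    calc (n + 2) * ((n + 1)! * ∑ k ∈ range (n + 2), m.choose k)
        = (n + 2) * (n + 1) * (n ! * ∑ k ∈ range (n + 2), m.choose k) := by
          rw [factorial_succ]; ring
      _ ≤ m * (n + 1) * m ^ (n + 1) := by gcongr
      _ = (n + 1) * m ^ (n + 2) := by ring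
  have hlast := succ_mul_factorial_mul_choose_succ_le_pow m (n + 1)
  refine Nat.le_of_mul_le_mul_left ?_ (succ_pos (n + 1))
  rw [sum_range_succ, Nat.mul_add, Nat.mul_add]
  linarith

theorem factorial_mul_sum_choose_le_pow (m d : ℕ) (hd : 2 ≤ d) (hdm : d ≤ m) :
    Nat.factorial (d - 1) * (∑ k ∈ Finset.range (d + 1), Nat.choose m k) ≤ m ^ d := by
  obtain ⟨n, rfl⟩ : ∃ n, d = n + 2 := ⟨d - 2, by omega⟩
  rw [show n + 2 - 1 = n + 1 by omega]
  induction n with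
  | zero => simpa using sum_range_three_choose_le_sq hdm
  | succ n ih => exact factorial_mul_sum_choose_succ_le hdm (ih (by omega) (by omega))
end

section
/- Define F : ℕ → ℝ × ℝ → ℝ × ℝ by F 1 (x, y) = (|x|, |y|) and, for k ≥ 1, F (k+1) (x, y) = (Real.cos (π/2^(k+1)) · (F k (x,y)).1 + Real.sin (π/2^(k+1)) · (F k (x,y)).2, |Real.cos (π/2^(k+1)) · (F k (x,y)).2 − Real.sin (π/2^(k+1)) · (F k (x,y)).1|). Then for every k ≥ 1 and every (x, y) ∈ ℝ × ℝ, Real.cos (π/2^k) · Real.sqrt (x^2 + y^2) ≤ (F k (x,y)).1 ∧ (F k (x,y)).1 ≤ Real.sqrt (x^2 + y^2). -/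
/-! Write a point of the closed first quadrant in polar form `(r cos α, r sin α)` with
`0 ≤ α ≤ π/2`. The map `p ↦ (cos θ p.1 + sin θ p.2, |cos θ p.2 - sin θ p.1|)` rotates by `-θ` and
then reflects into the upper half-plane, so it sends angle `α` to `|α - θ|` and keeps the radius.
Since `θ_{k+1} = θ_k / 2`, an angle in `[0, θ_k]` is sent into `[0, θ_{k+1}]`; hence after `k`
steps the angle lies in `[0, θ_k]` and the first coordinate `r cos α` lies between
`r cos θ_k` and `r`. -/

open Real

noncomputable def polar (r α : ℝ) : ℝ × ℝ := (r * cos α, r * sin α)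

noncomputable def rotateFold (θ : ℝ) (p : ℝ × ℝ) : ℝ × ℝ :=
  (cos θ * p.1 + sin θ * p.2, |cos θ * p.2 - sin θ * p.1|)

theorem rotateFold_polar {r α θ : ℝ} (hr : 0 ≤ r) (hαθ : |α - θ| ≤ π) :
    rotateFold θ (polar r α) = polar r |α - θ| := by
  have hsin : cos θ * (r * sin α) - sin θ * (r * cos α) = r * sin (α - θ) := by
    rw [sin_sub]; ring
  rw [rotateFold, polar, polar, hsin, abs_mul, abs_of_nonneg hr,
    abs_sin_eq_sin_abs_of_abs_le_pi hαθ, cos_abs, cos_sub]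
  congr 1
  ring

theorem exists_polar_abs (x y : ℝ) :
    ∃ α, 0 ≤ α ∧ α ≤ π / 2 ∧ (|x|, |y|) = polar √(x ^ 2 + y ^ 2) α := by
  set z : ℂ := |x| + |y| * Complex.I
  have hnorm : ‖z‖ = √(x ^ 2 + y ^ 2) := by
    rw [Complex.norm_add_mul_I, sq_abs, sq_abs]
  refine ⟨z.arg, Complex.arg_nonneg_iff.mpr (by simp [z]),
    Complex.arg_le_pi_div_two_iff.mpr (Or.inl (by simp [z])), ?_⟩
  rw [polar, ← hnorm, Complex.norm_mul_cos_arg, Complex.norm_mul_sin_arg]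
  simp [z]

theorem pi_div_two_pow_succ (k : ℕ) : π / 2 ^ (k + 1) = π / 2 ^ k / 2 := by
  rw [pow_succ, div_div]

theorem pi_div_two_pow_le_pi (k : ℕ) : π / 2 ^ k ≤ π :=
  div_le_self pi_pos.le (one_le_pow₀ one_le_two)

theorem abs_sub_half_le_half {α θ : ℝ} (hα₀ : 0 ≤ α) (hα : α ≤ θ) :
    |α - θ / 2| ≤ θ / 2 :=
  abs_le.mpr ⟨by linarith, by linarith⟩

theorem exists_angle_of_rotateFold_iterate (F : ℕ → ℝ × ℝ) (r : ℝ) (hr : 0 ≤ r)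
    (h1 : ∃ α, 0 ≤ α ∧ α ≤ π / 2 ∧ F 1 = polar r α)
    (hrec : ∀ k, 1 ≤ k → F (k + 1) = rotateFold (π / 2 ^ (k + 1)) (F k)) :
    ∀ k, 1 ≤ k → ∃ α, 0 ≤ α ∧ α ≤ π / 2 ^ k ∧ F k = polar r α := by
  intro k hk
  induction k, hk using Nat.le_induction with
  | base => simpa using h1
  | succ k hk ih =>
    obtain ⟨α, hα₀, hα, hFk⟩ := ih
    have hhalf := abs_sub_half_le_half hα₀ hα
    rw [← pi_div_two_pow_succ] at hhalf
    refine ⟨_, abs_nonneg _, hhalf, ?_⟩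
    rw [hrec k hk, hFk, rotateFold_polar hr]
    exact hhalf.trans (pi_div_two_pow_le_pi _)

theorem cos_mul_le_fst_polar_le {r α θ : ℝ} (hr : 0 ≤ r) (hα₀ : 0 ≤ α) (hα : α ≤ θ)
    (hθ : θ ≤ π) : cos θ * r ≤ (polar r α).1 ∧ (polar r α).1 ≤ r := by
  have hcos : cos θ ≤ cos α := cos_le_cos_of_nonneg_of_le_pi hα₀ hθ hα
  constructor
  · rw [polar, mul_comm]
    exact mul_le_mul_of_nonneg_left hcos hr
  · exact mul_le_of_le_one_right hr (cos_le_one α)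

theorem deep_rectifier_norm_approx_2d (F : ℕ → ℝ × ℝ → ℝ × ℝ)
    (hF1 : ∀ x y : ℝ, F 1 (x, y) = (|x|, |y|))
    (hFrec : ∀ k : ℕ, 1 ≤ k → ∀ x y : ℝ, F (k + 1) (x, y) =
      (Real.cos (π / 2 ^ (k + 1)) * (F k (x, y)).1 +
        Real.sin (π / 2 ^ (k + 1)) * (F k (x, y)).2,
       |Real.cos (π / 2 ^ (k + 1)) * (F k (x, y)).2 -
        Real.sin (π / 2 ^ (k + 1)) * (F k (x, y)).1|)) :
    ∀ k : ℕ, 1 ≤ k → ∀ x y : ℝ,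
      Real.cos (π / 2 ^ k) * Real.sqrt (x ^ 2 + y ^ 2) ≤ (F k (x, y)).1 ∧
      (F k (x, y)).1 ≤ Real.sqrt (x ^ 2 + y ^ 2) := by
  intro k hk x y
  obtain ⟨α, hα₀, hα, hFk⟩ :=
    exists_angle_of_rotateFold_iterate (fun k => F k (x, y)) _ (sqrt_nonneg _)
      (by rw [hF1]; exact exists_polar_abs x y) (fun k hk => hFrec k hk x y) k hk
  rw [hFk]
  exact cos_mul_le_fst_polar_le (sqrt_nonneg _) hα₀ hα (pi_div_two_pow_le_pi k)
end

section
/- Define F : ℕ → ℝ × ℝ → ℝ × ℝ by F 1 (x, y) = (|x|, |y|) and, for k ≥ 1, F (k+1) (x, y) = (Real.cos (π/2^(k+1)) · (F k (x,y)).1 + Real.sin (π/2^(k+1)) · (F k (x,y)).2, |Real.cos (π/2^(k+1)) · (F k (x,y)).2 − Real.sin (π/2^(k+1)) · (F k (x,y)).1|). Then for every k ≥ 1 and every (x, y) ∈ ℝ × ℝ, setting r = Real.sqrt (x^2 + y^2), there exists t ∈ Set.Icc 0 (π/2^k) such that (F k (x,y)).1 = r · Real.cos t and (F k (x,y)).2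 = r · Real.sin t. -/
/-!
Write `F k (x, y) = r (cos t, sin t)` with `r = √(x² + y²)` and `t ∈ [0, π/2^k]`. For `k = 1` the
angle is that of the point `(|x|, |y|)` of the closed first quadrant. The step with
`θ = π/2^(k+1)` rotates the point by `-θ`, which moves its angle to `t - θ ∈ [-θ, θ]`, and the
absolute value on the second coordinate reflects it into `[0, θ]`, giving the angle `|t - θ|`.
-/

open Real Set

lemma exists_polar_of_nonneg {a b : ℝ} (ha : 0 ≤ a) (hb : 0 ≤ b) :
    ∃ t ∈ Icc 0 (π / 2), a = √(a ^ 2 + b ^ 2) * cos t ∧ b = √(a ^ 2 + b ^ 2) * sin t := by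
  set z : ℂ := ⟨a, b⟩
  have hz : ‖z‖ = √(a ^ 2 + b ^ 2) := Complex.norm_eq_sqrt_sq_add_sq z
  refine ⟨z.arg, ⟨Complex.arg_nonneg_iff.mpr hb, Complex.arg_le_pi_div_two_iff.mpr (.inl ha)⟩,
    ?_, ?_⟩
  · rw [← hz, Complex.norm_mul_cos_arg]
  · rw [← hz, Complex.norm_mul_sin_arg]

lemma polar_rotate_fold {r t θ : ℝ} (hr : 0 ≤ r) (ht : t ∈ Icc 0 (2 * θ)) (hθ : θ ≤ π) :
    |t - θ| ∈ Icc 0 θ ∧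
      cos θ * (r * cos t) + sin θ * (r * sin t) = r * cos |t - θ| ∧
      |cos θ * (r * sin t) - sin θ * (r * cos t)| = r * sin |t - θ| := by
  have hfold : |t - θ| ≤ θ := abs_sub_le_iff.mpr ⟨by linarith [ht.2], by linarith [ht.1]⟩
  refine ⟨⟨abs_nonneg _, hfold⟩, ?_, ?_⟩
  · rw [cos_abs, cos_sub]
    ring
  · calc |cos θ * (r * sin t) - sin θ * (r * cos t)| = |r * sin (t - θ)| := by
          rw [sin_sub]; ring_nf
      _ = r * sin |t - θ| := by
          rw [abs_mul, abs_of_nonneg hr, abs_sin_eq_sin_abs_of_abs_le_pi (hfold.trans hθ)]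

theorem deep_rectifier_polar_form_2d (F : ℕ → ℝ × ℝ → ℝ × ℝ)
    (hF1 : ∀ x y : ℝ, F 1 (x, y) = (|x|, |y|))
    (hFrec : ∀ k : ℕ, 1 ≤ k → ∀ x y : ℝ, F (k + 1) (x, y) =
      (Real.cos (π / 2 ^ (k + 1)) * (F k (x, y)).1 +
        Real.sin (π / 2 ^ (k + 1)) * (F k (x, y)).2,
       |Real.cos (π / 2 ^ (k + 1)) * (F k (x, y)).2 -
        Real.sin (π / 2 ^ (k + 1)) * (F k (x, y)).1|)) :
    ∀ k : ℕ, 1 ≤ k → ∀ x y : ℝ,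
      ∃ t ∈ Set.Icc (0 : ℝ) (π / 2 ^ k),
        (F k (x, y)).1 = Real.sqrt (x ^ 2 + y ^ 2) * Real.cos t ∧
        (F k (x, y)).2 = Real.sqrt (x ^ 2 + y ^ 2) * Real.sin t := by
  intro k hk x y
  induction k, hk using Nat.le_induction with
  | base =>
    simpa only [hF1, pow_one, sq_abs] using exists_polar_of_nonneg (abs_nonneg x) (abs_nonneg y)
  | succ k hk ih =>
    obtain ⟨t, ht, hcos, hsin⟩ := ih
    have hhalf : π / 2 ^ k = 2 * (π / 2 ^ (k + 1)) := by
      rw [pow_succ]; field_simp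
    have hθ : π / 2 ^ (k + 1) ≤ π :=
      div_le_self pi_pos.le (one_le_pow₀ one_le_two)
    obtain ⟨hfold, hfst, hsnd⟩ :=
      polar_rotate_fold (sqrt_nonneg (x ^ 2 + y ^ 2)) (hhalf ▸ ht) hθ
    exact ⟨_, hfold, by rw [hFrec k hk, hcos, hsin, hfst], by rw [hFrec k hk, hcos, hsin, hsnd]⟩
end
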